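/- Let (K,G) be a topological dynamical system, let fix = {f ∈ C(K,ℂ) : f(g·x) = f(x) for all g ∈ G, x ∈ K}, and let R_fix = {(x,y) ∈ K × K : f(x) = f(y) for all f ∈ fix}. Then R_fix is the smallest closed equivalence relation on K containing the orbit relation R = {(x, g·x) : x ∈ K, g ∈ G}. In particular, every continuous G-invariant function K → ℂ is constant if and only if the smallest closed equivalence relation on K containing R equals K × K. -/

import Mathlib

/-!
The relation `R_fix` is an intersection of kernels of continuous maps, hence a closed
equivalence relation; it contains the orbit relation, hence the smallest such relation `E`.
Conversely, `E` is closed and `K` is compact, so the saturation of a closed set is the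
projection of a closed subset of `K × K`, hence closed; the quotient map `K → K / E` is then
proper, so `K / E` is compact Hausdorff. Urysohn's lemma on `K / E` separates any two
`E`-inequivalent points by a continuous function constant on `E`-classes, and such a function
is `G`-invariant.
-/

open Filter Topology Set Function

/-- The smallest closed equivalence relation on `K` containing the relation `R`. -/
def smallestClosedEquiv {K : Type} [TopologicalSpace K] (R : Set (K × K)) : Set (K × K) :=
  ⋂₀ {E : Set (K × K) | R ⊆ E ∧ IsClosed E ∧ (∀ x : K, (x, x) ∈ E) ∧
    (∀ a b : K, (a, b) ∈ E → (b, a) ∈ E) ∧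
    (∀ a b c : K, (a, b) ∈ E → (b, c) ∈ E → (a, c) ∈ E)}

namespace Setoid

variable {K : Type*} [TopologicalSpace K] [CompactSpace K] {s : Setoid K}

lemma isClosedMap_quotient_mk (hs : IsClosed {p : K × K | s p.1 p.2}) :
    IsClosedMap (Quotient.mk s) := by
  intro C hC
  refine isQuotientMap_quotient_mk'.isClosed_preimage.1 ?_
  have hsat : Quotient.mk s ⁻¹' (Quotient.mk s '' C) =
      Prod.fst '' ({p : K × K | s p.1 p.2} ∩ Prod.snd ⁻¹' C) := by
    ext a
    simp only [mem_preimage, mem_image, Quotient.eq, mem_inter_iff, mem_ofPred_eq, Prod.exists]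
    exact ⟨fun ⟨c, hc, hca⟩ => ⟨a, c, ⟨s.symm hca, hc⟩, rfl⟩,
      fun ⟨_, c, ⟨hac, hc⟩, rfl⟩ => ⟨c, hc, s.symm hac⟩⟩
  change IsClosed (Quotient.mk s ⁻¹' _)
  rw [hsat]
  exact isClosedMap_fst_of_compactSpace _ (hs.inter (hC.preimage continuous_snd))

lemma isProperMap_quotient_mk (hs : IsClosed {p : K × K | s p.1 p.2}) :
    IsProperMap (Quotient.mk s) := by
  refine isProperMap_iff_isClosedMap_and_compact_fibers.2
    ⟨continuous_quotient_mk', isClosedMap_quotient_mk hs, fun q => ?_⟩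
  obtain ⟨a, rfl⟩ := Quotient.exists_rep q
  have hfiber :
      Quotient.mk s ⁻¹' {⟦a⟧} = (fun k => (k, a)) ⁻¹' {p : K × K | s p.1 p.2} := by
    ext k
    exact Quotient.eq
  rw [hfiber]
  exact (hs.preimage (by fun_prop)).isCompact

lemma t2Space_quotient (hs : IsClosed {p : K × K | s p.1 p.2}) : T2Space (Quotient s) := by
  have hdiag :
      diagonal (Quotient s) = Prod.map (Quotient.mk s) (Quotient.mk s) '' {p | s p.1 p.2} := by
    ext ⟨p, q⟩
    induction p using Quotient.inductionOn with | h a => ?_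
    induction q using Quotient.inductionOn with | h b => ?_
    simp only [mem_diagonal_iff, Quotient.eq, mem_image, mem_ofPred_eq, Prod.exists,
      Prod.map_apply, Prod.mk.injEq]
    exact ⟨fun h => ⟨a, b, h, s.refl a, s.refl b⟩,
      fun ⟨a', b', h, ha, hb⟩ => s.trans (s.trans (s.symm ha) h) hb⟩
  rw [t2_iff_isClosed_diagonal, hdiag]
  exact ((isProperMap_quotient_mk hs).prodMap (isProperMap_quotient_mk hs)).isClosedMap _ hs

lemma exists_continuousMap_ne (hs : IsClosed {p : K × K | s p.1 p.2}) {x y : K}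
    (hxy : ¬ s x y) :
    ∃ u : C(K, ℝ), (∀ a b, s a b → u a = u b) ∧ u x ≠ u y := by
  have := t2Space_quotient hs
  have hne : (⟦x⟧ : Quotient s) ≠ ⟦y⟧ := fun h => hxy (Quotient.eq.1 h)
  obtain ⟨u, hux, huy, -⟩ := exists_continuous_zero_one_of_isClosed
    (isClosed_singleton (x := (⟦x⟧ : Quotient s))) isClosed_singleton
    (disjoint_singleton.2 hne)
  refine ⟨u.comp ⟨Quotient.mk s, continuous_quotient_mk'⟩, fun a b hab => ?_, ?_⟩
  · simp [Quotient.sound hab]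
  · simp [hux rfl, huy rfl]

end Setoid

section SmallestClosedEquiv

variable {K : Type} [TopologicalSpace K] {R E : Set (K × K)}

lemma subset_smallestClosedEquiv : R ⊆ smallestClosedEquiv R :=
  fun _ hz _ hE => hE.1 hz

lemma isClosed_smallestClosedEquiv : IsClosed (smallestClosedEquiv R) :=
  isClosed_sInter fun _ hE => hE.2.1

lemma equivalence_smallestClosedEquiv (R : Set (K × K)) :
    Equivalence fun a b => (a, b) ∈ smallestClosedEquiv R where
  refl x _ hE := hE.2.2.1 x
  symm h _ hE := hE.2.2.2.1 _ _ (h _ hE)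
  trans h h' _ hE := hE.2.2.2.2 _ _ _ (h _ hE) (h' _ hE)

lemma smallestClosedEquiv_subset (hRE : R ⊆ E) (hE : IsClosed E)
    (hequiv : Equivalence fun a b => (a, b) ∈ E) : smallestClosedEquiv R ⊆ E :=
  sInter_subset_of_mem ⟨hRE, hE, hequiv.refl, fun _ _ => hequiv.symm, fun _ _ _ => hequiv.trans⟩

lemma smallestClosedEquiv_subset_setOf_forall_eq {Y : Type*} [TopologicalSpace Y] [T2Space Y]
    (F : Set C(K, Y)) (hF : ∀ f ∈ F, ∀ w ∈ R, f w.1 = f w.2) :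
    smallestClosedEquiv R ⊆ {z | ∀ f ∈ F, f z.1 = f z.2} := by
  refine smallestClosedEquiv_subset (fun w hw f hf => hF f hf w hw) ?_
    ⟨fun _ _ _ => rfl, fun h f hf => (h f hf).symm, fun h h' f hf => (h f hf).trans (h' f hf)⟩
  simp only [ofPred_forall]
  exact isClosed_biInter fun f _ => isClosed_eq (by fun_prop) (by fun_prop)

theorem smallestClosedEquiv_eq_setOf_forall_continuousMap_real [CompactSpace K] :
    smallestClosedEquiv R =
      {z | ∀ f : C(K, ℝ), (∀ w ∈ R, f w.1 = f w.2) → f z.1 = f z.2} := by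
  refine (smallestClosedEquiv_subset_setOf_forall_eq _ fun _ hf => hf).antisymm fun z hz => ?_
  by_contra hzR
  obtain ⟨u, hu, hzu⟩ := Setoid.exists_continuousMap_ne
    (s := ⟨_, equivalence_smallestClosedEquiv R⟩) isClosed_smallestClosedEquiv hzR
  exact hzu (hz u fun w hw => hu _ _ (subset_smallestClosedEquiv hw))

end SmallestClosedEquiv

theorem statement12_general {G K : Type} [Group G] [TopologicalSpace K] [CompactSpace K]
    [MulAction G K] :
    ({z : K × K | ∀ f : ContinuousMap K ℂ,
        (∀ (g : G) (x : K), f (g • x) = f x) → f z.1 = f z.2} =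
      smallestClosedEquiv {z : K × K | ∃ g : G, g • z.1 = z.2}) ∧
    ((∀ f : ContinuousMap K ℂ,
        (∀ (g : G) (x : K), f (g • x) = f x) → ∀ x y : K, f x = f y) ↔
      smallestClosedEquiv {z : K × K | ∃ g : G, g • z.1 = z.2} = Set.univ) := by
  set R : Set (K × K) := {z | ∃ g : G, g • z.1 = z.2}
  have hfix :
      {z : K × K | ∀ f : C(K, ℂ), (∀ (g : G) x, f (g • x) = f x) → f z.1 = f z.2} =
        smallestClosedEquiv R := by
    refine Subset.antisymm (fun z hz => ?_) (smallestClosedEquiv_subset_setOf_forall_eq _ ?_)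
    · rw [smallestClosedEquiv_eq_setOf_forall_continuousMap_real]
      intro u hu
      have hinv : ∀ (g : G) x, u (g • x) = u x := fun g x => (hu (x, g • x) ⟨g, rfl⟩).symm
      simpa using hz ((⟨Complex.ofReal, Complex.continuous_ofReal⟩ : C(ℝ, ℂ)).comp u)
        fun g x => by simp [hinv g x]
    · rintro f hf w ⟨g, hg⟩
      exact hg ▸ (hf g w.1).symm
  refine ⟨hfix, fun h => ?_, fun h f hf x y => ?_⟩
  · rw [← hfix]
    exact eq_univ_of_forall fun z f hf => h f hf z.1 z.2
  · have hxy : (x, y) ∈ smallestClosedEquiv R := h ▸ mem_univ _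
    exact (hfix ▸ hxy) f hf

/-- For a topological dynamical system `(K,G)`, the relation
`R_fix = {(x,y) | f(x) = f(y) for all continuous G-invariant f}` is the smallest closed
equivalence relation containing the orbit relation. In particular, every continuous
`G`-invariant function is constant iff this smallest closed equivalence relation is all
of `K × K`. -/
theorem statement12 {G K : Type} [Group G] [TopologicalSpace G] [IsTopologicalGroup G]
    [T2Space G] [TopologicalSpace K] [CompactSpace K] [T2Space K] [Nonempty K]
    [MulAction G K] [ContinuousSMul G K] :
    ({z : K × K | ∀ f : ContinuousMap K ℂ,
        (∀ (g : G) (x : K), f (g • x) = f x) → f z.1 = f z.2} =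
      smallestClosedEquiv {z : K × K | ∃ g : G, g • z.1 = z.2}) ∧
    ((∀ f : ContinuousMap K ℂ,
        (∀ (g : G) (x : K), f (g • x) = f x) → ∀ x y : K, f x = f y) ↔
      smallestClosedEquiv {z : K × K | ∃ g : G, g • z.1 = z.2} = Set.univ) :=
  statement12_general
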